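/- Let L_M be an Orlicz space on (0,1) associated with a convex function M satisfying M(0)=0, M(t)>0 for t>0, lim_{t→0} M(t)/t = 0 and lim_{t→∞} t/M(t) = 0. Then for every x ∈ L_M, φ(x) = lim_{n→∞} (1/n)‖σ_n(x*)‖_{L_M} = 0. -/

import Mathlib

open MeasureTheory Filter Set Topology

/-- Decreasing rearrangement of `f`, viewed as a function on the domain `D ⊆ ℝ`:
`x*(t) = inf { s ≥ 0 : m({u ∈ D : |f u| ≥ s}) ≤ t }`. -/
noncomputable def rearr (D : Set ℝ) (f : ℝ → ℝ) (t : ℝ) : ℝ :=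
  sInf {s : ℝ | 0 ≤ s ∧ volume {u : ℝ | u ∈ D ∧ s ≤ |f u|} ≤ ENNReal.ofReal t}

/-- `submaj D x y` means `y ≺≺ x` (Hardy–Littlewood–Pólya submajorization):
`∫₀ᵗ y* ≤ ∫₀ᵗ x*` for all `t ≥ 0`. -/
def submaj (D : Set ℝ) (x y : ℝ → ℝ) : Prop :=
  ∀ t : ℝ, 0 ≤ t →
    (∫ s in Set.Ioc (0:ℝ) t, rearr D y s) ≤ ∫ s in Set.Ioc (0:ℝ) t, rearr D x s

/-- Dilation operator on functions on `(0,∞)`: `(σ_τ f)(s) = f (s/τ)`. -/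
noncomputable def dilInf (τ : ℝ) (f : ℝ → ℝ) : ℝ → ℝ := fun s => f (s / τ)

/-- Dilation operator on functions on `(0,1)`. -/
noncomputable def dilOne (τ : ℝ) (f : ℝ → ℝ) : ℝ → ℝ :=
  fun s => if s ≤ min 1 τ then f (s / τ) else 0

/-- `x ∈ L¹ + L∞` on the domain `D`. -/
def MemL1L (D : Set ℝ) (x : ℝ → ℝ) : Prop :=
  ∃ g h : ℝ → ℝ, (∀ t ∈ D, x t = g t + h t) ∧ MeasureTheory.IntegrableOn g D ∧
    ∃ C : ℝ, ∀ t ∈ D, |h t| ≤ C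

/-- A symmetric Banach function space on the domain `D`, with dilation operators `dl`. -/
structure SymmSpace (D : Set ℝ) (dl : ℝ → (ℝ → ℝ) → ℝ → ℝ) where
  Mem : (ℝ → ℝ) → Prop
  nrm : (ℝ → ℝ) → ℝ
  zero_mem : Mem 0
  add_mem : ∀ f g, Mem f → Mem g → Mem (f + g)
  smul_mem : ∀ (c : ℝ) (f), Mem f → Mem (c • f)
  mem_meas : ∀ f, Mem f → AEMeasurable f
  nrm_nonneg : ∀ f, 0 ≤ nrm f
  nrm_add_le : ∀ f g, Mem f → Mem g → nrm (f + g) ≤ nrm f + nrm g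
  nrm_smul : ∀ (c : ℝ) (f), nrm (c • f) = |c| * nrm f
  ideal : ∀ f g, Mem f → (∀ t ∈ D, |g t| ≤ |f t|) → Mem g ∧ nrm g ≤ nrm f
  symm : ∀ f g, Mem f → rearr D g = rearr D f → Mem g ∧ nrm g = nrm f
  dil_mem : ∀ (τ : ℝ) (f), 0 < τ → Mem f → Mem (dl τ f)
  dil_nrm : ∀ (τ : ℝ) (f), 0 < τ → Mem f → nrm (dl τ f) ≤ max 1 τ * nrm f

/-- The dilation functional `φ(x) = lim_{s→∞} (1/s) ‖σ_s(x*)‖_E`. -/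
noncomputable def phi {D : Set ℝ} {dl : ℝ → (ℝ → ℝ) → ℝ → ℝ}
    (E : SymmSpace D dl) (x : ℝ → ℝ) : ℝ :=
  limUnder atTop (fun s : ℝ => (1 / s) * E.nrm (dl s (rearr D x)))

/-- `E` is strictly symmetric: submajorization of members decreases the norm. -/
def StrictlySymm {D : Set ℝ} {dl : ℝ → (ℝ → ℝ) → ℝ → ℝ} (E : SymmSpace D dl) : Prop :=
  ∀ f g, E.Mem f → E.Mem g → submaj D f g → E.nrm g ≤ E.nrm f

/-- `E` is fully symmetric: any `g ∈ L¹+L∞` submajorized by a member is a member,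
with smaller norm. -/
def FullySymm {D : Set ℝ} {dl : ℝ → (ℝ → ℝ) → ℝ → ℝ} (E : SymmSpace D dl) : Prop :=
  ∀ f g, E.Mem f → Measurable g → MemL1L D g → submaj D f g → E.Mem g ∧ E.nrm g ≤ E.nrm f

/-- `D` is `(0,1)` with its dilation, or `(0,∞)` with its dilation. -/
def EitherDom (D : Set ℝ) (dl : ℝ → (ℝ → ℝ) → ℝ → ℝ) : Prop :=
  (D = Set.Ioo (0:ℝ) 1 ∧ dl = dilOne) ∨ (D = Set.Ioi (0:ℝ) ∧ dl = dilInf)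

/-- `Q'(x)`: the norm closure (in `E`) of the convex hull of the set of nonnegative
functions equimeasurable with `x`. -/
def Qprime {D : Set ℝ} {dl : ℝ → (ℝ → ℝ) → ℝ → ℝ}
    (E : SymmSpace D dl) (x : ℝ → ℝ) : Set (ℝ → ℝ) :=
  {y | E.Mem y ∧ ∀ ε : ℝ, 0 < ε → ∃ z ∈ convexHull ℝ
      {u : ℝ → ℝ | E.Mem u ∧ (∀ t ∈ D, 0 ≤ u t) ∧ rearr D u = rearr D x},
      E.nrm (y - z) < ε}

/-- Luxemburg norm of the Orlicz space `L_M` on `(0,1)`. -/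
noncomputable def luxNorm (M : ℝ → ℝ) (f : ℝ → ℝ) : ℝ :=
  sInf {lam : ℝ | 0 < lam ∧
    ∫⁻ t in Set.Ioo (0:ℝ) 1, ENNReal.ofReal (M (|f t| / lam)) ≤ 1}


/-!
The Luxemburg norm of `σ_s x*` grows sublinearly because of two facts.

* Convexity and `M 0 = 0` give `M (c r) ≤ c M r` for `c ∈ [0, 1]`. After the substitution
  `t = s u`, the modular of `σ_s x*` at level `s ε` is therefore at most
  `(λ / ε) ∫_0^{1/s} M (x* / λ)`. This tends to `0` by absolute continuity of the integral, so
  `‖σ_s x*‖ ≤ s ε` for large `s`.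
* The modular of `x*` at level `λ` is at most that of `x`. Indeed `x*` exceeds `s` only on
  `(0, m(|x| ≥ s))`, so `x*` is dominated in distribution by `|x|`, and the layer-cake formula
  turns this into domination of `∫ F(x*)` by `∫ F(|x|)` for every monotone `F`.
-/

open scoped ENNReal

section Dominance

variable {α β : Type*} [MeasurableSpace α] [MeasurableSpace β] {μ : Measure α} {ν : Measure β}
  {g : α → ℝ} {f : β → ℝ}

theorem IsUpperSet.eq_empty_or_univ_or_Ici_or_Ioi {γ : Type*}
    [ConditionallyCompleteLinearOrder γ] {S : Set γ} (hS : IsUpperSet S) :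
    S = ∅ ∨ S = univ ∨ (∃ c, S = Ici c) ∨ ∃ c, S = Ioi c := by
  rcases S.eq_empty_or_nonempty with hempty | hne
  · exact .inl hempty
  by_cases hbdd : BddBelow S
  · right; right
    by_cases hc : sInf S ∈ S
    · refine .inl ⟨sInf S, Subset.antisymm (fun r hr => csInf_le hbdd hr) fun r hr => hS hr hc⟩
    · refine .inr ⟨sInf S, Subset.antisymm (fun r hr => ?_) fun r hr => ?_⟩
      · exact (csInf_le hbdd hr).lt_of_ne fun h => hc (h ▸ hr)
      · obtain ⟨r', hr'S, hr'r⟩ := (csInf_lt_iff hbdd hne).1 hr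
        exact hS hr'r.le hr'S
  · refine .inr <| .inl <| eq_univ_of_forall fun r => ?_
    obtain ⟨r', hr'S, hr'r⟩ := not_bddBelow_iff.1 hbdd r
    exact hS hr'r.le hr'S

theorem measure_lt_le_of_measure_lt_le_measure_le
    (h : ∀ s, μ {a | s < g a} ≤ ν {b | s ≤ f b}) (s : ℝ) :
    μ {a | s < g a} ≤ ν {b | s < f b} := by
  obtain ⟨u, hu_anti, hsu, hu⟩ := exists_seq_strictAnti_tendsto s
  have hunion : {a | s < g a} = ⋃ n, {a | u n < g a} := by
    ext a
    simp only [mem_ofPred_eq, mem_iUnion]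
    exact ⟨fun ha => (hu.eventually (gt_mem_nhds ha)).exists, fun ⟨n, hn⟩ => (hsu n).trans hn⟩
  have hmono : Monotone fun n => {a | u n < g a} := fun m n hmn a ha =>
    (hu_anti.antitone hmn).trans_lt ha
  rw [hunion, hmono.measure_iUnion]
  exact iSup_le fun n => (h (u n)).trans (measure_mono fun b hb => (hsu n).trans_le hb)

theorem measure_le_le_of_measure_lt_le_measure_le [IsFiniteMeasure ν]
    (h : ∀ s, μ {a | s < g a} ≤ ν {b | s ≤ f b}) (hf : AEMeasurable f ν) (s : ℝ) :
    μ {a | s ≤ g a} ≤ ν {b | s ≤ f b} := by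
  obtain ⟨u, hu_mono, hus, hu⟩ := exists_seq_strictMono_tendsto s
  have hinter : {b | s ≤ f b} = ⋂ n, {b | u n < f b} := by
    ext b
    simp only [mem_ofPred_eq, mem_iInter]
    exact ⟨fun hb n => (hus n).trans_le hb, fun hb => le_of_tendsto' hu fun n => (hb n).le⟩
  have hanti : Antitone fun n => {b | u n < f b} := fun m n hmn b hb =>
    (hu_mono.monotone hmn).trans_lt hb
  rw [hinter, hanti.measure_iInter (fun n => nullMeasurableSet_lt aemeasurable_const hf)
    ⟨0, measure_ne_top _ _⟩]
  exact le_iInf fun n => (measure_mono fun a ha => (hus n).trans_le ha).trans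
    (measure_lt_le_of_measure_lt_le_measure_le h (u n))

theorem measure_univ_le_of_measure_lt_le_measure_le
    (h : ∀ s, μ {a | s < g a} ≤ ν {b | s ≤ f b}) : μ univ ≤ ν univ := by
  have hunion : (univ : Set α) = ⋃ n : ℕ, {a | -(n : ℝ) < g a} :=
    (eq_univ_of_forall fun a => mem_iUnion.2 ((exists_nat_gt (-g a)).imp fun n hn =>
      neg_lt.1 hn)).symm
  have hmono : Monotone fun n : ℕ => {a | -(n : ℝ) < g a} :=
    fun m n hmn a (ha : -(m : ℝ) < g a) =>
      show -(n : ℝ) < g a from (neg_le_neg (Nat.cast_le.2 hmn)).trans_lt ha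
  rw [hunion, hmono.measure_iUnion]
  exact iSup_le fun n => (h _).trans (measure_mono (subset_univ _))

theorem measure_preimage_le_of_measure_lt_le_measure_le [IsFiniteMeasure ν]
    (h : ∀ s, μ {a | s < g a} ≤ ν {b | s ≤ f b}) (hf : AEMeasurable f ν) {S : Set ℝ}
    (hS : IsUpperSet S) : μ (g ⁻¹' S) ≤ ν (f ⁻¹' S) := by
  rcases hS.eq_empty_or_univ_or_Ici_or_Ioi with rfl | rfl | ⟨c, rfl⟩ | ⟨c, rfl⟩
  · simp
  · exact measure_univ_le_of_measure_lt_le_measure_le h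
  · exact measure_le_le_of_measure_lt_le_measure_le h hf c
  · exact measure_lt_le_of_measure_lt_le_measure_le h c

theorem lintegral_ofReal_comp_le_of_measure_lt_le_measure_le [IsFiniteMeasure ν]
    (h : ∀ s, μ {a | s < g a} ≤ ν {b | s ≤ f b}) (hg : AEMeasurable g μ) (hf : AEMeasurable f ν)
    {F : ℝ → ℝ} (hF : Monotone F) :
    ∫⁻ a, ENNReal.ofReal (F (g a)) ∂μ ≤ ∫⁻ b, ENNReal.ofReal (F (f b)) ∂ν := by
  set G : ℝ → ℝ := fun r => max (F r) 0
  have hG : Monotone G := fun r r' hrr' => max_le_max (hF hrr') le_rfl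
  have hFG : ∀ r, ENNReal.ofReal (F r) = ENNReal.ofReal (G r) := by simp [G]
  simp only [hFG]
  rw [lintegral_eq_lintegral_meas_lt μ (f := fun a => G (g a))
      (ae_of_all _ fun _ => le_max_right _ _) (hG.measurable.comp_aemeasurable hg),
    lintegral_eq_lintegral_meas_lt ν (f := fun b => G (f b))
      (ae_of_all _ fun _ => le_max_right _ _) (hG.measurable.comp_aemeasurable hf)]
  exact lintegral_mono fun t => measure_preimage_le_of_measure_lt_le_measure_le h hf
    (S := {r | t < G r}) fun r r' hrr' hr => hr.trans_le (hG hrr')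

end Dominance

section Rearrangement

variable {D : Set ℝ} {x : ℝ → ℝ}

theorem rearr_nonneg (D : Set ℝ) (x : ℝ → ℝ) (t : ℝ) : 0 ≤ rearr D x t :=
  Real.sInf_nonneg fun _ hr => hr.1

theorem volume_lt_rearr_le (hD : volume D ≠ ⊤) {s : ℝ} (hs : 0 ≤ s) :
    volume {t | 0 < t ∧ s < rearr D x t} ≤ volume {u | u ∈ D ∧ s ≤ |x u|} := by
  have hfin : volume {u | u ∈ D ∧ s ≤ |x u|} ≠ ⊤ :=
    ne_top_of_le_ne_top hD (measure_mono fun _ hu => hu.1)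
  calc volume {t | 0 < t ∧ s < rearr D x t}
      ≤ volume (Ioo 0 (volume {u | u ∈ D ∧ s ≤ |x u|}).toReal) := by
        refine measure_mono fun t ⟨ht, hst⟩ => ⟨ht, ?_⟩
        rw [← ENNReal.ofReal_lt_iff_lt_toReal ht.le hfin]
        exact lt_of_not_ge fun hle => hst.not_ge (csInf_le ⟨0, fun _ hr => hr.1⟩ ⟨hs, hle⟩)
    _ = volume {u | u ∈ D ∧ s ≤ |x u|} := by
        rw [Real.volume_Ioo, sub_zero, ENNReal.ofReal_toReal hfin]

theorem exists_volume_le_abs_le (hDm : MeasurableSet D) (hD : volume D ≠ ⊤) (hx : Measurable x)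
    {t : ℝ} (ht : 0 < t) : ∃ r, 0 ≤ r ∧ volume {u | u ∈ D ∧ r ≤ |x u|} ≤ ENNReal.ofReal t := by
  have hanti : Antitone fun r : ℝ => {u | u ∈ D ∧ r ≤ |x u|} := fun r r' hrr' u hu =>
    ⟨hu.1, hrr'.trans hu.2⟩
  have hempty : ⋂ r : ℝ, {u | u ∈ D ∧ r ≤ |x u|} = ∅ :=
    eq_empty_of_forall_notMem fun u hu => (lt_add_one |x u|).not_ge (mem_iInter.1 hu _).2
  have htendsto := tendsto_measure_iInter_atTop (μ := volume)
    (s := fun r : ℝ => {u | u ∈ D ∧ r ≤ |x u|})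
    (fun r => (hDm.inter (measurableSet_le measurable_const hx.abs)).nullMeasurableSet) hanti
    ⟨0, ne_top_of_le_ne_top hD (measure_mono fun _ hu => hu.1)⟩
  rw [hempty, measure_empty] at htendsto
  obtain ⟨r, hr, hr0⟩ := ((htendsto.eventually (ge_mem_nhds (ENNReal.ofReal_pos.2 ht))).and
    (eventually_ge_atTop 0)).exists
  exact ⟨r, hr0, hr⟩

theorem rearr_antitoneOn (hDm : MeasurableSet D) (hD : volume D ≠ ⊤) (hx : Measurable x) :
    AntitoneOn (rearr D x) (Ioi 0) := fun _ ht _ _ htt' =>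
  csInf_le_csInf ⟨0, fun _ hr => hr.1⟩ (exists_volume_le_abs_le hDm hD hx ht)
    fun _ hr => ⟨hr.1, hr.2.trans (ENNReal.ofReal_le_ofReal htt')⟩

theorem lintegral_rearr_le (hDm : MeasurableSet D) (hD : volume D ≠ ⊤) (hx : Measurable x)
    {F : ℝ → ℝ} (hF : MonotoneOn F (Ici 0)) :
    ∫⁻ t in Ioo 0 (volume D).toReal, ENNReal.ofReal (F (rearr D x t)) ≤
      ∫⁻ u in D, ENNReal.ofReal (F |x u|) := by
  have hvol : volume (Ioo 0 (volume D).toReal) = volume D := by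
    rw [Real.volume_Ioo, sub_zero, ENNReal.ofReal_toReal hD]
  have hdom : ∀ s, volume.restrict (Ioo 0 (volume D).toReal) {t | s < rearr D x t} ≤
      volume.restrict D {u | s ≤ |x u|} := by
    intro s
    rcases lt_or_ge s 0 with hs | hs
    · have huniv : {u | s ≤ |x u|} = univ :=
        eq_univ_of_forall fun u => hs.le.trans (abs_nonneg (x u))
      calc volume.restrict (Ioo 0 (volume D).toReal) {t | s < rearr D x t}
          ≤ volume.restrict (Ioo 0 (volume D).toReal) univ := measure_mono (subset_univ _)
        _ = volume.restrict D {u | s ≤ |x u|} := by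
          rw [huniv, Measure.restrict_apply_univ, Measure.restrict_apply_univ, hvol]
    · rw [Measure.restrict_apply' measurableSet_Ioo, Measure.restrict_apply' hDm, inter_comm _ D]
      exact (measure_mono (t := {t | 0 < t ∧ s < rearr D x t}) fun t ht => ⟨ht.2.1, ht.1⟩).trans
        (volume_lt_rearr_le hD hs)
  have : IsFiniteMeasure (volume.restrict D) := isFiniteMeasure_restrict.2 hD
  have := lintegral_ofReal_comp_le_of_measure_lt_le_measure_le hdom
    (aemeasurable_restrict_of_antitoneOn measurableSet_Ioo
      ((rearr_antitoneOn hDm hD hx).mono Ioo_subset_Ioi_self))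
    (hx.abs.aemeasurable) (F := fun r => F (max r 0))
    (fun r r' hrr' => hF (le_max_right r 0) (le_max_right r' 0) (max_le_max hrr' le_rfl))
  simpa only [fun t => max_eq_left (rearr_nonneg D x t), fun u => max_eq_left (abs_nonneg (x u))]
    using this

end Rearrangement

theorem ConvexOn.map_smul_le {E : Type*} [AddCommGroup E] [Module ℝ E] {S : Set E} {φ : E → ℝ}
    (hφ : ConvexOn ℝ S φ) (h0 : (0 : E) ∈ S) (hφ0 : φ 0 = 0) {c : ℝ} (hc0 : 0 ≤ c) (hc1 : c ≤ 1)
    {v : E} (hv : v ∈ S) : φ (c • v) ≤ c * φ v := by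
  simpa [hφ0] using hφ.2 h0 hv (sub_nonneg.2 hc1) hc0 (sub_add_cancel 1 c)

theorem ConvexOn.monotoneOn_of_isMinOn {φ : ℝ → ℝ} {a : ℝ} (hφ : ConvexOn ℝ (Ici a) φ)
    (hmin : IsMinOn φ (Ici a) a) : MonotoneOn φ (Ici a) := by
  intro r hr r' hr' hrr'
  rcases (show a ≤ r from hr).eq_or_lt with rfl | har
  · exact isMinOn_iff.1 hmin r' hr'
  · exact hφ.le_right_of_left_le'' self_mem_Ici hr' har hrr' (isMinOn_iff.1 hmin r hr)

theorem luxNorm_nonneg (M f : ℝ → ℝ) : 0 ≤ luxNorm M f :=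
  Real.sInf_nonneg fun _ hc => hc.1.le

theorem luxNorm_le_of_lintegral_le {M f : ℝ → ℝ} {c : ℝ} (hc : 0 < c)
    (h : ∫⁻ t in Ioo (0 : ℝ) 1, ENNReal.ofReal (M (|f t| / c)) ≤ 1) : luxNorm M f ≤ c :=
  csInf_le ⟨0, fun _ hc => hc.1.le⟩ ⟨hc, h⟩

theorem setLIntegral_Ioo_comp_mul_const (G : ℝ → ℝ≥0∞) {c : ℝ} (hc : 0 < c) (a b : ℝ) :
    ∫⁻ t in Ioo (a / c) (b / c), G (t * c) = ENNReal.ofReal c⁻¹ * ∫⁻ u in Ioo a b, G u := by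
  have he := measurableEmbedding_mulRight₀ hc.ne'
  calc ∫⁻ t in Ioo (a / c) (b / c), G (t * c)
      = ∫⁻ u, G u ∂(volume.restrict ((· * c) ⁻¹' Ioo a b)).map (· * c) := by
        rw [he.lintegral_map, preimage_mul_const_Ioo₀ a b hc]
    _ = ENNReal.ofReal c⁻¹ * ∫⁻ u in Ioo a b, G u := by
        rw [← Measure.restrict_map he.measurable measurableSet_Ioo,
          Real.map_volume_mul_right hc.ne', Measure.restrict_smul, lintegral_smul_measure,
          abs_of_pos (inv_pos.2 hc), smul_eq_mul]

theorem setLIntegral_dilOne (G : ℝ → ℝ≥0∞) (f : ℝ → ℝ) {s : ℝ} (hs : 1 ≤ s) :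
    ∫⁻ t in Ioo 0 1, G (dilOne s f t) = ENNReal.ofReal s * ∫⁻ u in Ioo 0 s⁻¹, G (f u) := by
  have hs0 : 0 < s := one_pos.trans_le hs
  calc ∫⁻ t in Ioo 0 1, G (dilOne s f t)
      = ∫⁻ t in Ioo (0 / s⁻¹) (s⁻¹ / s⁻¹), G (f (t * s⁻¹)) := by
        rw [zero_div, div_self (inv_ne_zero hs0.ne')]
        refine setLIntegral_congr_fun measurableSet_Ioo fun t ht => ?_
        rw [dilOne, if_pos (le_min ht.2.le (ht.2.le.trans hs)), div_eq_mul_inv]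
    _ = ENNReal.ofReal s * ∫⁻ u in Ioo 0 s⁻¹, G (f u) := by
        rw [setLIntegral_Ioo_comp_mul_const (fun u => G (f u)) (inv_pos.2 hs0), inv_inv]

theorem tendsto_setLIntegral_Ioo_nhdsGT {h : ℝ → ℝ≥0∞} {a b : ℝ} (hab : a < b)
    (hh : ∫⁻ u in Ioo a b, h u ≠ ⊤) :
    Tendsto (fun δ => ∫⁻ u in Ioo a δ, h u) (𝓝[>] a) (𝓝 0) := by
  have hvol : Tendsto (fun δ => volume (Ioo a δ)) (𝓝[>] a) (𝓝 0) := by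
    simp_rw [Real.volume_Ioo]
    rw [← ENNReal.ofReal_zero, ← sub_self a]
    exact ENNReal.tendsto_ofReal
      (((continuous_id.sub continuous_const).tendsto a).mono_left nhdsWithin_le_nhds)
  have hvol' : Tendsto (fun δ => volume.restrict (Ioo a b) (Ioo a δ)) (𝓝[>] a) (𝓝 0) :=
    tendsto_of_tendsto_of_tendsto_of_le_of_le tendsto_const_nhds hvol (fun _ => bot_le)
      fun _ => Measure.restrict_apply_le _ _
  refine (tendsto_setLIntegral_zero hh hvol').congr' ?_
  filter_upwards [Ioo_mem_nhdsGT hab] with δ hδ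
  rw [Measure.restrict_restrict measurableSet_Ioo,
    inter_eq_left.2 (Ioo_subset_Ioo_right hδ.2.le)]

section Orlicz

variable {M : ℝ → ℝ}

theorem luxNorm_dilOne_le (hM : ConvexOn ℝ (Ici 0) M) (hM0 : M 0 = 0) (f : ℝ → ℝ)
    {lam ε s : ℝ} (hlam : 0 < lam) (hε : 0 < ε) (hs : 1 ≤ s) (hlams : lam ≤ s * ε)
    (htail : ENNReal.ofReal (lam / ε) * ∫⁻ u in Ioo 0 s⁻¹, ENNReal.ofReal (M (|f u| / lam)) ≤ 1) :
    luxNorm M (dilOne s f) ≤ s * ε := by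
  have hs0 : 0 < s := one_pos.trans_le hs
  have hsε : 0 < s * ε := mul_pos hs0 hε
  have hscale : ∀ r, M (|r| / (s * ε)) ≤ lam / (s * ε) * M (|r| / lam) := fun r => by
    have := hM.map_smul_le self_mem_Ici hM0 (div_nonneg hlam.le hsε.le)
      ((div_le_one hsε).2 hlams) (mem_Ici.2 (div_nonneg (abs_nonneg r) hlam.le))
    have heq : lam / (s * ε) * (|r| / lam) = |r| / (s * ε) := by field_simp
    rwa [smul_eq_mul, heq] at this
  refine luxNorm_le_of_lintegral_le hsε ?_
  calc ∫⁻ t in Ioo 0 1, ENNReal.ofReal (M (|dilOne s f t| / (s * ε)))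
      = ENNReal.ofReal s * ∫⁻ u in Ioo 0 s⁻¹, ENNReal.ofReal (M (|f u| / (s * ε))) :=
        setLIntegral_dilOne (fun r => ENNReal.ofReal (M (|r| / (s * ε)))) f hs
    _ ≤ ENNReal.ofReal s * ∫⁻ u in Ioo 0 s⁻¹,
          ENNReal.ofReal (lam / (s * ε)) * ENNReal.ofReal (M (|f u| / lam)) := by
        gcongr with u
        rw [← ENNReal.ofReal_mul (div_nonneg hlam.le hsε.le)]
        exact ENNReal.ofReal_le_ofReal (hscale _)
    _ = ENNReal.ofReal (lam / ε) * ∫⁻ u in Ioo 0 s⁻¹, ENNReal.ofReal (M (|f u| / lam)) := by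
        rw [lintegral_const_mul' _ _ ENNReal.ofReal_ne_top, ← mul_assoc,
          ← ENNReal.ofReal_mul hs0.le]
        congr 2
        field_simp
    _ ≤ 1 := htail

theorem tendsto_inv_mul_luxNorm_dilOne (hM : ConvexOn ℝ (Ici 0) M) (hM0 : M 0 = 0)
    {f : ℝ → ℝ} {lam : ℝ} (hlam : 0 < lam)
    (hf : ∫⁻ t in Ioo 0 1, ENNReal.ofReal (M (|f t| / lam)) ≠ ⊤) :
    Tendsto (fun s => 1 / s * luxNorm M (dilOne s f)) atTop (𝓝 0) := by
  have htail : Tendsto (fun s : ℝ => ∫⁻ u in Ioo 0 s⁻¹, ENNReal.ofReal (M (|f u| / lam)))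
      atTop (𝓝 0) :=
    (tendsto_setLIntegral_Ioo_nhdsGT one_pos hf).comp tendsto_inv_atTop_nhdsGT_zero
  refine tendsto_order.2 ⟨fun a ha => (eventually_gt_atTop 0).mono fun s hs =>
    ha.trans_le (mul_nonneg (one_div_nonneg.2 hs.le) (luxNorm_nonneg _ _)), fun a ha => ?_⟩
  have hε : 0 < a / 2 := half_pos ha
  have hsmall := ENNReal.Tendsto.const_mul htail (.inr (ENNReal.ofReal_ne_top (r := lam / (a / 2))))
  rw [mul_zero] at hsmall
  filter_upwards [eventually_ge_atTop 1, eventually_ge_atTop (lam / (a / 2)),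
    hsmall.eventually (ge_mem_nhds one_pos)] with s hs1 hslam hstail
  have hs0 : 0 < s := one_pos.trans_le hs1
  calc 1 / s * luxNorm M (dilOne s f)
      ≤ 1 / s * (s * (a / 2)) := by
        gcongr
        exact luxNorm_dilOne_le hM hM0 f hlam hε hs1 ((div_le_iff₀ hε).1 hslam) hstail
    _ = a / 2 := by field_simp
    _ < a := half_lt_self ha

end Orlicz

theorem stmt18_general (M : ℝ → ℝ) (hconv : ConvexOn ℝ (Set.Ici 0) M) (hM0 : M 0 = 0)
    (hMpos : ∀ t : ℝ, 0 < t → 0 < M t)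
    (x : ℝ → ℝ) (hxm : Measurable x)
    (hx : ∃ lam : ℝ, 0 < lam ∧
      ∫⁻ t in Set.Ioo (0:ℝ) 1, ENNReal.ofReal (M (|x t| / lam)) ≤ 1) :
    Tendsto (fun s : ℝ => (1 / s) * luxNorm M (dilOne s (rearr (Set.Ioo 0 1) x)))
      atTop (nhds 0) := by
  obtain ⟨lam, hlam, hxlam⟩ := hx
  have hmin : IsMinOn M (Ici 0) 0 := isMinOn_iff.2 fun t ht => by
    rcases (mem_Ici.1 ht).eq_or_lt with rfl | ht
    · exact le_rfl
    · rw [hM0]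
      exact (hMpos t ht).le
  have hMmono : MonotoneOn M (Ici 0) := hconv.monotoneOn_of_isMinOn hmin
  have hF : MonotoneOn (fun r => M (|r| / lam)) (Ici 0) := fun r hr r' hr' hrr' => hMmono
    (div_nonneg (abs_nonneg r) hlam.le) (div_nonneg (abs_nonneg r') hlam.le)
    (by rw [abs_of_nonneg hr, abs_of_nonneg hr']; gcongr)
  have hmodular : ∫⁻ t in Ioo 0 1, ENNReal.ofReal (M (|rearr (Ioo 0 1) x t| / lam)) ≤ 1 := by
    have := lintegral_rearr_le (D := Ioo (0 : ℝ) 1) measurableSet_Ioo (by simp) hxm hF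
    simp only [Real.volume_Ioo, sub_zero, ENNReal.ofReal_one, ENNReal.toReal_one, abs_abs] at this
    exact this.trans hxlam
  exact tendsto_inv_mul_luxNorm_dilOne hconv hM0 hlam
    (ne_top_of_le_ne_top ENNReal.one_ne_top hmodular)

/-- for an Orlicz space `L_M` on `(0,1)` (with `M` convex, vanishing
only at `0`, `M(t)/t → 0` as `t → 0⁺` and `t/M(t) → 0` as `t → ∞`), one has
`φ(x) = lim_{n→∞} (1/n)‖σ_n(x*)‖_{L_M} = 0` for every `x ∈ L_M`. -/
theorem stmt18 (M : ℝ → ℝ) (hconv : ConvexOn ℝ (Set.Ici 0) M) (hM0 : M 0 = 0)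
    (hMpos : ∀ t : ℝ, 0 < t → 0 < M t)
    (h0 : Tendsto (fun t : ℝ => M t / t) (nhdsWithin 0 (Set.Ioi 0)) (nhds 0))
    (hinfty : Tendsto (fun t : ℝ => t / M t) atTop (nhds 0))
    (x : ℝ → ℝ) (hxm : Measurable x)
    (hx : ∃ lam : ℝ, 0 < lam ∧
      ∫⁻ t in Set.Ioo (0:ℝ) 1, ENNReal.ofReal (M (|x t| / lam)) ≤ 1) :
    Tendsto (fun s : ℝ => (1 / s) * luxNorm M (dilOne s (rearr (Set.Ioo 0 1) x)))
      atTop (nhds 0) :=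
  stmt18_general M hconv hM0 hMpos x hxm hx
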